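/- Let N ≥ 3, n ∈ ℕ, 0 ≤ k ≤ n, and set β_n = (2n+N)(2n+N−2)/(N(N−2)). Let H : ℝ^N → ℝ be a harmonic polynomial that is homogeneous of degree k. Then the function w(x) = H(x) · (1 + |x|²)^{−(k+(N−2)/2)} · P_{n−k}^{(k+(N−2)/2, k+(N−2)/2)}( (1 − |x|²)/(1 + |x|²) ) satisfies −Δw(x) = β_n · U(x)^{4/(N−2)} · w(x) for every x ∈ ℝ^N. -/

import Mathlib

open scoped BigOperators

/-- Second directional derivative of `f` at `x` in direction `v`. -/
noncomputable def secondDeriv {E : Type*} [NormedAddCommGroup E] [NormedSpace ℝ E]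
    (f : E → ℝ) (v : E) (x : E) : ℝ :=
  fderiv ℝ (fun y => fderiv ℝ f y v) x v

/-- The Laplacian (sum of second partial derivatives) on `ℝ^N`. -/
noncomputable def laplacian {N : ℕ} (f : EuclideanSpace ℝ (Fin N) → ℝ)
    (x : EuclideanSpace ℝ (Fin N)) : ℝ :=
  ∑ i : Fin N, secondDeriv f (EuclideanSpace.single i 1) x

/-- The standard bubble `U(x) = (N(N-2))^((N-2)/4) (1+|x|^2)^(-(N-2)/2)`. -/
noncomputable def U (N : ℕ) (x : EuclideanSpace ℝ (Fin N)) : ℝ :=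
  ((N : ℝ) * ((N : ℝ) - 2)) ^ (((N : ℝ) - 2) / 4) * (1 + ‖x‖ ^ 2) ^ (-(((N : ℝ) - 2) / 2))

/-- Generalized binomial coefficient `C(a, k) = a(a-1)⋯(a-k+1)/k!`. -/
noncomputable def genBinom (a : ℝ) (k : ℕ) : ℝ :=
  (∏ i ∈ Finset.range k, (a - i)) / (Nat.factorial k)

/-- The Jacobi polynomial `P_m^{(b,c)}`. -/
noncomputable def jacobiP (m : ℕ) (b c : ℝ) (x : ℝ) : ℝ :=
  ∑ s ∈ Finset.range (m + 1),
    genBinom ((m : ℝ) + b) s * genBinom ((m : ℝ) + c) (m - s) *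
      ((x - 1) / 2) ^ (m - s) * ((x + 1) / 2) ^ s

/-!
Write `t = ‖x‖²`, `a = k + (N - 2) / 2` and `m = n - k`. The substitution `ξ = (1 - t) / (1 + t)`
turns `(1 + t) ^ (-a) · P_m^{(a,a)}(ξ)` into `(1 + t) ^ (-(m + a)) · Q(t)` for a polynomial `Q` of
degree `m`, whose coefficients obey a two-term recurrence; equivalently `Q` solves a
hypergeometric equation. For `w = H · f(‖x‖²)` with `H` harmonic and homogeneous of degree `k`,
Euler's identity `DH(x) x = k H(x)` gives `Δw = H · (4 t f'' + (2N + 4k) f')`, and the equation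
for `Q` turns this into `-4 (m + a) (m + a + 1) (1 + t)⁻² w`. Finally
`U ^ (4 / (N - 2)) = N (N - 2) (1 + t)⁻²` and `4 (m + a) (m + a + 1) = (2n + N) (2n + N - 2)`.
-/

open Polynomial

lemma succ_mul_genBinom_succ (a : ℝ) (p : ℕ) :
    ((p : ℝ) + 1) * genBinom a (p + 1) = (a - p) * genBinom a p := by
  have : (p.factorial : ℝ) ≠ 0 := Nat.cast_ne_zero.2 p.factorial_ne_zero
  simp only [genBinom, Finset.prod_range_succ, Nat.factorial_succ]
  push_cast
  field_simp

noncomputable def jacobiCayleyCoeff (a : ℝ) (m j : ℕ) : ℝ :=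
  (-1) ^ j * genBinom (m + a) j * genBinom (m + a) (m - j)

noncomputable def jacobiCayley (a : ℝ) (m : ℕ) : ℝ[X] :=
  ∑ j ∈ Finset.range (m + 1), C (jacobiCayleyCoeff a m j) * X ^ j

lemma jacobiCayleyCoeff_succ (a : ℝ) {m j : ℕ} (hj : j < m) :
    ((j : ℝ) + 1) * (a + j + 1) * jacobiCayleyCoeff a m (j + 1)
      = -(((m : ℝ) - j) * (m + a - j)) * jacobiCayleyCoeff a m j := by
  obtain ⟨p, hp⟩ : ∃ p, m - j = p + 1 := ⟨m - j - 1, by omega⟩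
  have hp' : m - (j + 1) = p := by omega
  have hpm : (p : ℝ) = m - j - 1 := by
    rw [eq_sub_iff_add_eq, eq_sub_iff_add_eq]; exact_mod_cast (by omega : p + 1 + j = m)
  have hBj := succ_mul_genBinom_succ (m + a) j
  have hBp := succ_mul_genBinom_succ (m + a) p
  rw [hpm] at hBp
  rw [jacobiCayleyCoeff, jacobiCayleyCoeff, hp', hp, pow_succ]
  linear_combination -(-1 : ℝ) ^ j * (a + j + 1) * genBinom (m + a) p * hBj
    + (-1 : ℝ) ^ j * (m + a - j) * genBinom (m + a) j * hBp

lemma eval_jacobiCayley (a : ℝ) (m : ℕ) (t : ℝ) :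
    (jacobiCayley a m).eval t = ∑ j ∈ Finset.range (m + 1), jacobiCayleyCoeff a m j * t ^ j := by
  simp [jacobiCayley, eval_finsetSum]

lemma jacobiP_cayley (a : ℝ) (m : ℕ) {t : ℝ} (ht : 1 + t ≠ 0) :
    jacobiP m a a ((1 - t) / (1 + t)) = (jacobiCayley a m).eval t / (1 + t) ^ m := by
  have hminus : ((1 - t) / (1 + t) - 1) / 2 = -t / (1 + t) := by field_simp; ring
  have hplus : ((1 - t) / (1 + t) + 1) / 2 = 1 / (1 + t) := by field_simp; ring
  rw [jacobiP, hminus, hplus, eval_jacobiCayley, Finset.sum_div,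
    ← Finset.sum_range_reflect]
  refine Finset.sum_congr rfl fun j hj => ?_
  have hjm : j ≤ m := Nat.lt_succ_iff.mp (Finset.mem_range.mp hj)
  rw [show m + 1 - 1 - j = m - j by omega, Nat.sub_sub_self hjm, jacobiCayleyCoeff,
    ← pow_sub_mul_pow (1 + t) hjm, div_pow, div_pow, one_pow, neg_pow]
  field_simp

lemma jacobiCayley_ode (a : ℝ) (m : ℕ) (t : ℝ) :
    4 * t * (1 + t) * (derivative (derivative (jacobiCayley a m))).eval t
      + ((4 * a + 4) * (1 + t) - 8 * (m + a) * t) * (derivative (jacobiCayley a m)).eval t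
      + 4 * m * (m + a) * (jacobiCayley a m).eval t = 0 := by
  let c := jacobiCayleyCoeff a m
  have hD : (derivative (jacobiCayley a m)).eval t
      = ∑ j ∈ Finset.range (m + 1), c j * j * t ^ (j - 1) := by
    simp [jacobiCayley, eval_finsetSum, derivative_X_pow, c, mul_assoc]
  have hDD : (derivative (derivative (jacobiCayley a m))).eval t
      = ∑ j ∈ Finset.range (m + 1), c j * j * ((j - 1 : ℕ) : ℝ) * t ^ (j - 1 - 1) := by
    simp [jacobiCayley, eval_finsetSum, derivative_X_pow, c, mul_assoc]
  -- each monomial contributes to two adjacent powers of `t`, and the two sums telescope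
  have hterm : ∀ j : ℕ,
      4 * t * (1 + t) * (c j * j * ((j - 1 : ℕ) : ℝ) * t ^ (j - 1 - 1))
        + ((4 * a + 4) * (1 + t) - 8 * (m + a) * t) * (c j * j * t ^ (j - 1))
        + 4 * m * (m + a) * (c j * t ^ j)
      = c j * (4 * j * (j + a)) * t ^ (j - 1) + c j * (4 * ((m : ℝ) - j) * (m + a - j)) * t ^ j
    | 0 => by push_cast; ring
    | 1 => by push_cast; ring
    | j + 2 => by
      rw [show j + 2 - 1 - 1 = j from rfl, show j + 2 - 1 = j + 1 from rfl]
      push_cast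
      ring
  rw [hD, hDD, eval_jacobiCayley, Finset.mul_sum, Finset.mul_sum, Finset.mul_sum,
    ← Finset.sum_add_distrib, ← Finset.sum_add_distrib, Finset.sum_congr rfl fun j _ => hterm j,
    Finset.sum_add_distrib, Finset.sum_range_succ', Finset.sum_range_succ _ m]
  simp only [Nat.cast_zero, mul_zero, zero_mul, add_zero, sub_self, ← Finset.sum_add_distrib]
  refine Finset.sum_eq_zero fun j hj => ?_
  have := jacobiCayleyCoeff_succ a (Finset.mem_range.mp hj)
  push_cast
  linear_combination 4 * t ^ j * this

noncomputable def weightedEval (b : ℝ) (q : ℝ[X]) (t : ℝ) : ℝ := (1 + t) ^ (-b) * q.eval t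

noncomputable def weightedDerivative (b : ℝ) (q : ℝ[X]) : ℝ[X] :=
  C (-b) * q + (1 + X) * derivative q

lemma hasDerivAt_weightedEval (b : ℝ) (q : ℝ[X]) {t : ℝ} (ht : -1 < t) :
    HasDerivAt (weightedEval b q) (weightedEval (b + 1) (weightedDerivative b q) t) t := by
  have ht' : 1 + t ≠ 0 := by linarith
  have hpow : HasDerivAt (fun s : ℝ => (1 + s) ^ (-b)) (-b * (1 + t) ^ (-b - 1)) t := by
    simpa using ((hasDerivAt_id' t).const_add 1).rpow_const (p := -b) (Or.inl ht')
  refine (hpow.mul (q.hasDerivAt t)).congr_deriv ?_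
  simp only [weightedEval, weightedDerivative, neg_add', Real.rpow_sub_one ht', eval_add,
    eval_mul, eval_C, eval_one, eval_X]
  field_simp

lemma weightedEval_ode {a b : ℝ} {q : ℝ[X]} {t : ℝ} (ht : -1 < t)
    (hq : 4 * t * (1 + t) * (derivative (derivative q)).eval t
      + ((4 * a + 4) * (1 + t) - 8 * b * t) * (derivative q).eval t
      + 4 * (b - a) * b * q.eval t = 0) :
    4 * t * weightedEval (b + 1 + 1) (weightedDerivative (b + 1) (weightedDerivative b q)) t
      + (4 * a + 4) * weightedEval (b + 1) (weightedDerivative b q) t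
      = -(4 * b * (b + 1)) * weightedEval b q t / (1 + t) ^ 2 := by
  have ht' : 1 + t ≠ 0 := by linarith
  simp only [weightedEval, weightedDerivative, neg_add', Real.rpow_sub_one ht', derivative_add,
    derivative_mul, derivative_C, derivative_one, derivative_X, eval_add, eval_mul, eval_C,
    eval_one, eval_X, eval_zero]
  field_simp
  linear_combination (1 + t) ^ (-b) * (1 + t) / 4 * hq

lemma one_add_rpow_neg_mul_jacobiP_cayley (a : ℝ) (m : ℕ) {t : ℝ} (ht : -1 < t) :
    (1 + t) ^ (-a) * jacobiP m a a ((1 - t) / (1 + t))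
      = weightedEval (m + a) (jacobiCayley a m) t := by
  have ht' : 0 < 1 + t := by linarith
  rw [jacobiP_cayley a m ht'.ne', weightedEval, Real.rpow_neg ht'.le, Real.rpow_neg ht'.le,
    Real.rpow_add ht', Real.rpow_natCast]
  field_simp

open scoped RealInnerProductSpace

section Calculus

variable {E : Type*} [NormedAddCommGroup E] [InnerProductSpace ℝ E]

lemma fderiv_apply_self_of_homogeneous {H : E → ℝ} {k : ℕ} {x : E} (hH : DifferentiableAt ℝ H x)
    (hhom : ∀ c : ℝ, 0 < c → H (c • x) = c ^ k * H x) :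
    fderiv ℝ H x x = k * H x := by
  have hsmul : HasDerivAt (fun c : ℝ => c • x) x 1 := by
    simpa using (hasDerivAt_id (1 : ℝ)).smul_const x
  have hH' : HasFDerivAt H (fderiv ℝ H x) ((1 : ℝ) • x) := by
    rw [one_smul]; exact hH.hasFDerivAt
  have hray : HasDerivAt (fun c : ℝ => H (c • x)) (fderiv ℝ H x x) 1 := hH'.comp_hasDerivAt 1 hsmul
  have hpow : HasDerivAt (fun c : ℝ => c ^ k * H x) (k * H x) 1 := by
    simpa using (hasDerivAt_pow k (1 : ℝ)).mul_const (H x)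
  refine hray.unique (hpow.congr_of_eventuallyEq ?_)
  filter_upwards [eventually_gt_nhds one_pos] with c hc
  exact hhom c hc

lemma fderiv_mul_radial_apply {H : E → ℝ} {f₀ f₁ : ℝ → ℝ} {y : E} (hH : DifferentiableAt ℝ H y)
    (hf₀ : HasDerivAt f₀ (f₁ (‖y‖ ^ 2)) (‖y‖ ^ 2)) (v : E) :
    fderiv ℝ (fun z => H z * f₀ (‖z‖ ^ 2)) y v
      = H y * (f₁ (‖y‖ ^ 2) * (2 * ⟪v, y⟫)) + f₀ (‖y‖ ^ 2) * fderiv ℝ H y v := by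
  have h : HasFDerivAt (fun z => H z * f₀ (‖z‖ ^ 2)) _ y :=
    hH.hasFDerivAt.mul (hf₀.comp_hasFDerivAt y (hasStrictFDerivAt_norm_sq y).hasFDerivAt)
  rw [h.fderiv]
  simp [real_inner_comm]

lemma secondDeriv_mul_radial {H : E → ℝ} (hH : ContDiff ℝ 2 H) {f₀ f₁ f₂ : ℝ → ℝ}
    (hf₀ : ∀ t, 0 ≤ t → HasDerivAt f₀ (f₁ t) t) {x : E}
    (hf₁ : HasDerivAt f₁ (f₂ (‖x‖ ^ 2)) (‖x‖ ^ 2)) (v : E) :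
    secondDeriv (fun y => H y * f₀ (‖y‖ ^ 2)) v x
      = f₀ (‖x‖ ^ 2) * secondDeriv H v x + 4 * f₁ (‖x‖ ^ 2) * ⟪x, v⟫ * fderiv ℝ H x v
        + H x * (2 * ‖v‖ ^ 2 * f₁ (‖x‖ ^ 2) + 4 * ⟪x, v⟫ ^ 2 * f₂ (‖x‖ ^ 2)) := by
  have hHd : Differentiable ℝ H := hH.differentiable two_ne_zero
  have hfirst : (fun y => fderiv ℝ (fun z => H z * f₀ (‖z‖ ^ 2)) y v)
      = fun y => H y * (f₁ (‖y‖ ^ 2) * (2 * ⟪v, y⟫)) + f₀ (‖y‖ ^ 2) * fderiv ℝ H y v :=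
    funext fun y => fderiv_mul_radial_apply (hHd y) (hf₀ _ (sq_nonneg _)) v
  have hDHv : DifferentiableAt ℝ (fun y => fderiv ℝ H y v) x :=
    ((hH.fderiv_right one_add_one_eq_two.le).differentiable one_ne_zero x).clm_apply
      (differentiableAt_const v)
  have hnorm := (hasStrictFDerivAt_norm_sq x).hasFDerivAt
  have hsecond : HasFDerivAt
      (fun y => H y * (f₁ (‖y‖ ^ 2) * (2 * ⟪v, y⟫)) + f₀ (‖y‖ ^ 2) * fderiv ℝ H y v) _ x :=
    ((hHd x).hasFDerivAt.mul ((hf₁.comp_hasFDerivAt x hnorm).mul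
      ((innerSL ℝ v).hasFDerivAt.const_mul 2))).add
    (((hf₀ _ (sq_nonneg _)).comp_hasFDerivAt x hnorm).mul hDHv.hasFDerivAt)
  rw [secondDeriv, hfirst, hsecond.fderiv]
  simp only [add_apply, smul_apply, smul_eq_mul, innerSL_apply_apply, Function.comp_apply,
    Pi.mul_apply, real_inner_self_eq_norm_sq, real_inner_comm x v]
  rw [show fderiv ℝ (fun y => fderiv ℝ H y v) x v = secondDeriv H v x from rfl]
  ring

end Calculus

lemma laplacian_mul_radial {N : ℕ} {H : EuclideanSpace ℝ (Fin N) → ℝ} (hH : ContDiff ℝ 2 H)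
    {f₀ f₁ f₂ : ℝ → ℝ} (hf₀ : ∀ t, 0 ≤ t → HasDerivAt f₀ (f₁ t) t)
    {x : EuclideanSpace ℝ (Fin N)} (hf₁ : HasDerivAt f₁ (f₂ (‖x‖ ^ 2)) (‖x‖ ^ 2)) :
    laplacian (fun y => H y * f₀ (‖y‖ ^ 2)) x
      = f₀ (‖x‖ ^ 2) * laplacian H x + 4 * f₁ (‖x‖ ^ 2) * fderiv ℝ H x x
        + H x * (2 * N * f₁ (‖x‖ ^ 2) + 4 * ‖x‖ ^ 2 * f₂ (‖x‖ ^ 2)) := by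
  have hDH : fderiv ℝ H x x = ∑ i, x i * fderiv ℝ H x (EuclideanSpace.single i 1) := by
    nth_rw 2 [← (EuclideanSpace.basisFun (Fin N) ℝ).sum_repr x]
    simp
  have hsq : ∑ i : Fin N, x i ^ 2 = ‖x‖ ^ 2 := (EuclideanSpace.real_norm_sq_eq x).symm
  unfold laplacian
  rw [Finset.sum_congr rfl fun i _ => secondDeriv_mul_radial hH hf₀ hf₁ _]
  simp only [EuclideanSpace.inner_single_right, PiLp.norm_single, norm_one, conj_trivial, one_pow,
    one_mul, mul_one, hDH, mul_assoc, Finset.sum_add_distrib, ← Finset.mul_sum, ← Finset.sum_mul,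
    Finset.sum_const, Finset.card_univ, Fintype.card_fin, nsmul_eq_mul, hsq]

lemma contDiff_mvPolynomial_eval {N : ℕ} (P : MvPolynomial (Fin N) ℝ) {n : WithTop ℕ∞} :
    ContDiff ℝ n (fun x : EuclideanSpace ℝ (Fin N) => MvPolynomial.eval (fun i => x i) P) :=
  (AnalyticOnNhd.eval_continuousLinearMap' (𝕜 := ℝ)
    (fun i => (EuclideanSpace.proj i : EuclideanSpace ℝ (Fin N) →L[ℝ] ℝ)) P).contDiff

lemma U_rpow_four_div {N : ℕ} (hN : 2 < N) (x : EuclideanSpace ℝ (Fin N)) :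
    U N x ^ ((4 : ℝ) / ((N : ℝ) - 2)) = N * (N - 2) / (1 + ‖x‖ ^ 2) ^ 2 := by
  have hN' : (0 : ℝ) < N - 2 := by
    rw [sub_pos]; exact_mod_cast hN
  have hNN : (0 : ℝ) ≤ N * (N - 2) := by positivity
  have hx : (0 : ℝ) < 1 + ‖x‖ ^ 2 := by positivity
  rw [U, Real.mul_rpow (by positivity) (by positivity), ← Real.rpow_mul hNN,
    ← Real.rpow_mul hx.le, show (N - 2 : ℝ) / 4 * (4 / (N - 2)) = 1 by field_simp,
    show -((N - 2 : ℝ) / 2) * (4 / (N - 2)) = -(2 : ℕ) by field_simp; norm_num,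
    Real.rpow_one, Real.rpow_neg hx.le, Real.rpow_natCast, div_eq_mul_inv]

theorem statement4 (N n k : ℕ) (hN : 3 ≤ N) (hk : k ≤ n)
    (H : EuclideanSpace ℝ (Fin N) → ℝ)
    (hpoly : ∃ P : MvPolynomial (Fin N) ℝ,
      ∀ x : EuclideanSpace ℝ (Fin N), H x = MvPolynomial.eval (fun i => x i) P)
    (hharm : ∀ x, laplacian H x = 0)
    (hhom : ∀ c : ℝ, 0 < c → ∀ x, H (c • x) = c ^ k * H x) :
    ∀ x : EuclideanSpace ℝ (Fin N),
      -laplacian (fun y =>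
          H y * (1 + ‖y‖ ^ 2) ^ (-((k : ℝ) + ((N : ℝ) - 2) / 2)) *
            jacobiP (n - k) ((k : ℝ) + ((N : ℝ) - 2) / 2) ((k : ℝ) + ((N : ℝ) - 2) / 2)
              ((1 - ‖y‖ ^ 2) / (1 + ‖y‖ ^ 2))) x =
        ((2 * (n : ℝ) + N) * (2 * (n : ℝ) + N - 2) / ((N : ℝ) * ((N : ℝ) - 2))) *
          U N x ^ ((4 : ℝ) / ((N : ℝ) - 2)) *
          (H x * (1 + ‖x‖ ^ 2) ^ (-((k : ℝ) + ((N : ℝ) - 2) / 2)) *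
            jacobiP (n - k) ((k : ℝ) + ((N : ℝ) - 2) / 2) ((k : ℝ) + ((N : ℝ) - 2) / 2)
              ((1 - ‖x‖ ^ 2) / (1 + ‖x‖ ^ 2))) := by
  intro x
  obtain ⟨P, hP⟩ := hpoly
  have hH : ContDiff ℝ 2 H := funext hP ▸ contDiff_mvPolynomial_eval P
  have hx : -1 < ‖x‖ ^ 2 := by linarith [sq_nonneg ‖x‖]
  set a : ℝ := k + (N - 2) / 2
  set q := jacobiCayley a (n - k)
  have hw : ∀ y : EuclideanSpace ℝ (Fin N),
      H y * (1 + ‖y‖ ^ 2) ^ (-a) * jacobiP (n - k) a a ((1 - ‖y‖ ^ 2) / (1 + ‖y‖ ^ 2))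
        = H y * weightedEval ((n - k : ℕ) + a) q (‖y‖ ^ 2) := fun y => by
    rw [mul_assoc, one_add_rpow_neg_mul_jacobiP_cayley _ _ (by linarith [sq_nonneg ‖y‖])]
  simp only [hw]
  rw [laplacian_mul_radial hH (fun t ht => hasDerivAt_weightedEval _ _ (by linarith))
      (hasDerivAt_weightedEval _ _ hx), hharm x,
    fderiv_apply_self_of_homogeneous (hH.differentiable two_ne_zero x) (fun c hc => hhom c hc x),
    U_rpow_four_div (by omega)]
  have hode := weightedEval_ode (a := a) (b := (n - k : ℕ) + a) hx
    (by linear_combination jacobiCayley_ode a (n - k) (‖x‖ ^ 2))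
  have hβ : (2 * (n : ℝ) + N) * (2 * n + N - 2) / (N * (N - 2))
      * (N * (N - 2) / (1 + ‖x‖ ^ 2) ^ 2)
      = 4 * ((n - k : ℕ) + a) * ((n - k : ℕ) + a + 1) / (1 + ‖x‖ ^ 2) ^ 2 := by
    have : (N : ℝ) - 2 ≠ 0 := by
      have : (3 : ℝ) ≤ N := by exact_mod_cast hN
      linarith
    rw [Nat.cast_sub hk]
    field_simp
    ring
  rw [show 4 * a + 4 = 2 * N + 4 * k by ring] at hode
  rw [hβ]
  linear_combination (-H x) * hode
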